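/- arXiv:2310.08978 — 7 statements merged into one kernel-verified Lean document; each statement's English description precedes it below -/
import Mathlib

section
/- The number of partitions of n in which every part appears with multiplicity at least 2 equals the number of partitions of n into parts that are even or congruent to 3 modulo 6. -/
/-!
Generating functions. A part `k` occurring either not at all or at least twice contributes the
factor `1 + X^(2k)/(1 - X^k) = (1 + X^(3k)) / (1 - X^(2k))`, so the left-hand side has generating
function `∏ (1 + X^(3k)) / ∏ (1 - X^(2k))`. By Euler's identity `∏ (1 + Y^k) = ∏ 1/(1 - Y^(2k-1))`
at `Y = X^3`, this is `1 / (∏ (1 - X^(2k)) ∏ (1 - X^(6k-3)))`, the generating function of the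
right-hand side. To avoid division, both generating functions are shown to be inverse to
`∏_{b ∈ B} (1 - X^b)`, as infinite products in the coefficientwise topology.
-/

open scoped Classical

/-- Number of partitions of `n` whose part multiplicities all lie in `A`. -/
noncomputable def partP (A : Set ℕ) (n : ℕ) : ℕ :=
  (Finset.univ.filter (fun p : Nat.Partition n =>
    ∀ i ∈ p.parts, Multiset.count i p.parts ∈ A)).card

/-- Number of partitions of `n` whose parts all lie in `B`. -/
noncomputable def partQ (B : Set ℕ) (n : ℕ) : ℕ :=
  (Finset.univ.filter (fun p : Nat.Partition n => ∀ i ∈ p.parts, i ∈ B)).card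

open Finset PowerSeries PowerSeries.WithPiTopology Nat.Partition

namespace PowerSeries.WithPiTopology

variable {R : Type*} [CommRing R] [TopologicalSpace R]

theorem multipliable_one_add_mul_X_pow (a : ℕ → R⟦X⟧) {e : ℕ → ℕ} (he : ∀ i, i < e i) :
    Multipliable fun i ↦ 1 + a i * X ^ e i := by
  nontriviality R
  refine multipliable_one_add_of_tendsto_order_atTop_nhds_top R <|
    ENat.tendsto_nhds_top_iff_natCast_lt.mpr fun n ↦ Filter.eventually_atTop.mpr ⟨n, fun i hi ↦ ?_⟩
  grw [← le_order_mul, order_X_pow]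
  refine lt_add_of_nonneg_of_lt (by simp) ?_
  exact_mod_cast hi.trans_lt (he i)

theorem multipliable_one_sub_X_pow_mul {k : ℕ} (hk : 0 < k) (e : ℕ → ℕ) (he : ∀ i, i < e i) :
    Multipliable fun i ↦ (1 : R⟦X⟧) - X ^ (k * e i) := by
  simpa [sub_eq_add_neg] using
    multipliable_one_add_mul_X_pow (fun _ ↦ (-1 : R⟦X⟧)) (e := fun i ↦ k * e i)
      fun i ↦ (he i).trans_le (Nat.le_mul_of_pos_left _ hk)

variable [T2Space R]

theorem constantCoeff_tprod_eq_one {f : ℕ → R⟦X⟧} (hf : Multipliable f)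
    (h : ∀ i, constantCoeff (f i) = 1) : constantCoeff (∏' i, f i) = 1 := by
  simp [hf.map_tprod _ (continuous_constantCoeff R), h]

variable [IsTopologicalRing R]

theorem tprod_one_add_X_pow_mul_tprod_one_sub_X_pow_odd {k : ℕ} (hk : 0 < k) :
    (∏' i, (1 + X ^ (k * (i + 1)) : R⟦X⟧)) * ∏' i, (1 - X ^ (k * (2 * i + 1))) = 1 := by
  have hsub (e : ℕ → ℕ) (he : ∀ i, i < e i) := multipliable_one_sub_X_pow_mul (R := R) hk e he
  have hplus : Multipliable fun i ↦ (1 + X ^ (k * (i + 1)) : R⟦X⟧) := by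
    simpa using multipliable_one_add_mul_X_pow (fun _ ↦ (1 : R⟦X⟧))
      (e := fun i ↦ k * (i + 1)) fun i ↦ by nlinarith
  have hsplit : (∏' i, (1 - X ^ (k * (2 * i + 1)) : R⟦X⟧)) * ∏' i, (1 - X ^ (k * (2 * i + 1 + 1)))
      = ∏' i, (1 - X ^ (k * (i + 1))) :=
    tprod_even_mul_odd (f := fun i ↦ (1 - X ^ (k * (i + 1)) : R⟦X⟧))
      (hsub _ fun i ↦ by omega) (hsub _ fun i ↦ by omega)
  have hsq : (∏' i, (1 + X ^ (k * (i + 1)) : R⟦X⟧)) * ∏' i, (1 - X ^ (k * (i + 1)))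
      = ∏' i, (1 - X ^ (k * (2 * i + 1 + 1))) := by
    rw [← hplus.tprod_mul (hsub _ fun i ↦ by omega)]
    exact tprod_congr fun i ↦ by ring
  have hunit : IsUnit (∏' i, (1 - X ^ (k * (2 * i + 1 + 1))) : R⟦X⟧) := by
    rw [isUnit_iff_constantCoeff, constantCoeff_tprod_eq_one (hsub _ fun i ↦ by omega)
      fun i ↦ by simp [Nat.mul_ne_zero hk.ne' (Nat.succ_ne_zero _)]]
    exact isUnit_one
  refine hunit.mul_left_injective ?_
  dsimp only
  rw [one_mul, mul_assoc, hsplit, hsq]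

theorem one_add_tsum_mul_one_sub_sq {Y : R⟦X⟧} (hY : constantCoeff Y = 0) :
    (1 + ∑' j, (if 2 ≤ j + 1 then (1 : R) else 0) • Y ^ (j + 1)) * (1 - Y ^ 2) = 1 + Y ^ 3 := by
  have hgeom := summable_pow_of_constantCoeff_eq_zero hY
  have hterm (j : ℕ) : (if 2 ≤ j + 1 + 1 then (1 : R) else 0) • Y ^ (j + 1 + 1) = Y ^ 2 * Y ^ j := by
    rw [if_pos (by omega), one_smul]
    ring
  have hsum : ∑' j, (if 2 ≤ j + 1 then (1 : R) else 0) • Y ^ (j + 1) = Y ^ 2 * ∑' j, Y ^ j := by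
    rw [tsum_eq_zero_add' (by simpa only [hterm] using hgeom.mul_left (Y ^ 2))]
    simp only [hterm, hgeom.tsum_mul_left]
    simp
  rw [hsum]
  linear_combination (Y ^ 2 * (1 + Y)) * tsum_pow_mul_one_sub_of_constantCoeff_eq_zero hY

end PowerSeries.WithPiTopology

theorem hasProd_powerSeriesMk_partP {R : Type*} [CommSemiring R] [TopologicalSpace R]
    [T2Space R] (A : Set ℕ) :
    HasProd (fun i ↦ 1 + ∑' j, (if j + 1 ∈ A then (1 : R) else 0) • X ^ ((i + 1) * (j + 1)))
      (PowerSeries.mk fun n ↦ (partP A n : R)) := by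
  convert hasProd_genFun (fun _ c ↦ if c ∈ A then (1 : R) else 0) using 1
  ext n
  rw [coeff_mk, coeff_genFun, partP, natCast_card_filter]
  refine Finset.sum_congr rfl fun p _ ↦ ?_
  rw [Finsupp.prod, Finset.prod_boole]
  simp only [Multiset.toFinsupp_support, Multiset.toFinsupp_apply, Multiset.mem_toFinset]

section ProdOneSubXPow

variable (R : Type*) [CommRing R] [TopologicalSpace R]

/-- `∏_{b ∈ S} (1 - X^b)`, indexed by `b - 1`: whether `0 ∈ S` does not matter. -/
noncomputable def prodOneSubXPow (S : Set ℕ) : R⟦X⟧ :=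
  ∏' i, if i + 1 ∈ S then 1 - X ^ (i + 1) else 1

variable {R}

theorem multipliable_ite_one_sub_X_pow (S : Set ℕ) :
    Multipliable fun i ↦ if i + 1 ∈ S then (1 - X ^ (i + 1) : R⟦X⟧) else 1 := by
  convert multipliable_one_add_mul_X_pow (fun i ↦ if i + 1 ∈ S then (-1 : R⟦X⟧) else 0)
    (e := (· + 1)) Nat.lt_succ_self using 2 with i
  split_ifs <;> ring

theorem prodOneSubXPow_eq_tprod {S : Set ℕ} {m : ℕ → ℕ} (hm : Function.Injective m)
    (hm0 : ∀ j, 0 < m j) (hS : ∀ b, 0 < b → (b ∈ S ↔ b ∈ Set.range m)) :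
    prodOneSubXPow R S = ∏' j, (1 - X ^ m j) := by
  have hg : Function.Injective fun j ↦ m j - 1 := fun a b hab ↦
    hm (by have := hm0 a; have := hm0 b; simp only at hab; omega)
  rw [prodOneSubXPow, ← hg.tprod_eq]
  · refine tprod_congr fun j ↦ ?_
    rw [Nat.sub_add_cancel (hm0 j), if_pos ((hS _ (hm0 j)).mpr ⟨j, rfl⟩)]
  · intro i hi
    by_cases hiS : i + 1 ∈ S
    · obtain ⟨j, hj⟩ := (hS _ i.succ_pos).mp hiS
      exact ⟨j, by simp only [hj]; omega⟩
    · simp [hiS] at hi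

variable [T2Space R] [IsTopologicalRing R]

theorem prodOneSubXPow_union {S T : Set ℕ} (h : ∀ b, 0 < b → b ∈ S → b ∉ T) :
    prodOneSubXPow R (S ∪ T) = prodOneSubXPow R S * prodOneSubXPow R T := by
  rw [prodOneSubXPow, prodOneSubXPow, prodOneSubXPow,
    ← (multipliable_ite_one_sub_X_pow S).tprod_mul (multipliable_ite_one_sub_X_pow T)]
  refine tprod_congr fun i ↦ ?_
  have := h (i + 1) i.succ_pos
  by_cases hS : i + 1 ∈ S <;> by_cases hT : i + 1 ∈ T <;> simp_all

theorem powerSeriesMk_partQ_mul_prodOneSubXPow (S : Set ℕ) :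
    PowerSeries.mk (fun n ↦ (partQ S n : R)) * prodOneSubXPow R S = 1 := by
  change PowerSeries.mk (fun n ↦ (#(restricted n (· ∈ S)) : R)) * _ = 1
  rw [← (hasProd_powerSeriesMk_card_restricted R (· ∈ S)).tprod_eq, prodOneSubXPow,
    ← (multipliable_powerSeriesMk_card_restricted R (· ∈ S)).tprod_mul
      (multipliable_ite_one_sub_X_pow S)]
  refine (tprod_congr fun i ↦ ?_).trans tprod_one
  split_ifs
  · simpa only [pow_mul] using tsum_pow_mul_one_sub_of_constantCoeff_eq_zero (by simp)
  · exact one_mul 1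

theorem prodOneSubXPow_even_or_mod_six_eq_three :
    prodOneSubXPow R {b | 2 ∣ b ∨ b % 6 = 3}
      = (∏' i, (1 - X ^ (2 * (i + 1)))) * ∏' i, (1 - X ^ (3 * (2 * i + 1))) := by
  have heven : prodOneSubXPow R {b | 2 ∣ b} = ∏' i, (1 - X ^ (2 * (i + 1))) :=
    prodOneSubXPow_eq_tprod (fun a b h ↦ by simp_all) (by simp) fun b hb ↦ by
      simp only [Set.mem_ofPred_eq, Set.mem_range]
      exact ⟨fun ⟨c, hc⟩ ↦ ⟨c - 1, by omega⟩, fun ⟨j, hj⟩ ↦ ⟨j + 1, hj.symm⟩⟩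
  have hodd : prodOneSubXPow R {b | b % 6 = 3} = ∏' i, (1 - X ^ (3 * (2 * i + 1))) :=
    prodOneSubXPow_eq_tprod (fun a b h ↦ by simp_all) (by simp) fun b hb ↦ by
      simp only [Set.mem_ofPred_eq, Set.mem_range]
      exact ⟨fun h ↦ ⟨b / 6, by omega⟩, fun ⟨j, hj⟩ ↦ by omega⟩
  rw [Set.ofPred_or, prodOneSubXPow_union fun b _ h2 h3 ↦ by simp_all; omega, heven, hodd]

theorem powerSeriesMk_partP_two_le_mul_tprod_one_sub_X_pow_two_mul :
    PowerSeries.mk (fun n ↦ (partP {t | 2 ≤ t} n : R)) * ∏' i, (1 - X ^ (2 * (i + 1)))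
      = ∏' i, (1 + X ^ (3 * (i + 1))) := by
  have hP := hasProd_powerSeriesMk_partP (R := R) {t | 2 ≤ t}
  have h2 : Multipliable fun i ↦ (1 : R⟦X⟧) - X ^ (2 * (i + 1)) :=
    multipliable_one_sub_X_pow_mul two_pos _ fun i ↦ Nat.lt_succ_self i
  rw [← hP.tprod_eq, ← hP.multipliable.tprod_mul h2]
  refine tprod_congr fun i ↦ ?_
  simp only [mul_comm 2 (i + 1), mul_comm 3 (i + 1), pow_mul, Set.mem_ofPred_eq]
  -- `convert`: the two `if`s carry different `Decidable` instances
  convert one_add_tsum_mul_one_sub_sq (R := R) (Y := X ^ (i + 1)) (by simp)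

theorem powerSeriesMk_partP_two_le_mul_prodOneSubXPow :
    PowerSeries.mk (fun n ↦ (partP {t | 2 ≤ t} n : R)) * prodOneSubXPow R {b | 2 ∣ b ∨ b % 6 = 3}
      = 1 := by
  rw [prodOneSubXPow_even_or_mod_six_eq_three, ← mul_assoc,
    powerSeriesMk_partP_two_le_mul_tprod_one_sub_X_pow_two_mul,
    tprod_one_add_X_pow_mul_tprod_one_sub_X_pow_odd three_pos]

end ProdOneSubXPow

/-- MacMahon: every part repeated at least twice vs parts even or ≡ 3 mod 6. -/
theorem macmahon (n : ℕ) :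
    partP {t | 2 ≤ t} n = partQ {b | 2 ∣ b ∨ b % 6 = 3} n := by
  have hgf := left_inv_eq_right_inv (powerSeriesMk_partP_two_le_mul_prodOneSubXPow (R := ℤ))
    ((mul_comm _ _).trans (powerSeriesMk_partQ_mul_prodOneSubXPow _))
  simpa using congrArg (coeff n) hgf
end

section
/- For any positive integer r, the number of partitions of n in which no part has multiplicity in {1, 3, 5, ..., 2r−1} equals the number of partitions of n into parts that are even or are odd multiples of 2r+1 (i.e., divisible by 2r+1 but not by 4r+2). -/
open scoped Classical

/-!
Both counts are coefficients of `Nat.Partition.genFun`. On the multiplicity side a part `i`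
contributes `∑_{c ∈ A} X^{ic} = (1 + X^{(2r+1)i}) / (1 - X^{2i})`, so the generating function is
`∏ (1 + Y^i) / ∏ (1 - X^{2i})` with `Y = X^{2r+1}`. On the part side it is
`1 / (∏ (1 - X^{2i}) ∏ (1 - Y^{2j+1}))`, and Euler's identity `∏ (1 + Y^i) ∏ (1 - Y^{2j+1}) = 1`
identifies the two.
-/

open Finset PowerSeries Filter

def andrewsMultiplicities (r : ℕ) : Set ℕ := {t | ¬ (Odd t ∧ t ≤ 2 * r - 1)}

def andrewsParts (r : ℕ) : Set ℕ := {b | 2 ∣ b ∨ ((2 * r + 1) ∣ b ∧ ¬ (4 * r + 2) ∣ b)}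

theorem mem_andrewsParts_iff_of_odd {r b : ℕ} (hb : Odd b) :
    b ∈ andrewsParts r ↔ 2 * r + 1 ∣ b := by
  refine ⟨fun h ↦ (h.resolve_left hb.not_two_dvd_nat).1, fun h ↦ Or.inr ⟨h, fun h' ↦ ?_⟩⟩
  exact hb.not_two_dvd_nat (dvd_trans ⟨2 * r + 1, by ring⟩ h')

theorem Nat.Partition.card_filter_eq_coeff_genFun {R : Type*} [CommSemiring R]
    (P : ℕ → ℕ → Prop) (n : ℕ) :
    (#{p : n.Partition | ∀ i ∈ p.parts, P i (p.parts.count i)} : R) =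
      coeff n (genFun fun i c ↦ if P i c then (1 : R) else 0) := by
  simp_rw [coeff_genFun, card_filter, Finsupp.prod, prod_boole]
  simp

namespace PowerSeries.WithPiTopology

variable {R : Type*} [CommRing R] [TopologicalSpace R]

theorem multipliable_one_add_mul_pow {Y : R⟦X⟧} (hY : constantCoeff Y = 0) (a : ℕ → R⟦X⟧)
    {g : ℕ → ℕ} (hg : ∀ i, i < g i) : Multipliable fun i ↦ 1 + a i * Y ^ g i := by
  refine multipliable_one_add_of_tendsto_order_atTop_nhds_top _
    (ENat.tendsto_nhds_top_iff_natCast_lt.mpr fun n ↦ eventually_atTop.mpr ⟨n, fun i hi ↦ ?_⟩)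
  calc (n : ℕ∞) < g i := by exact_mod_cast hi.trans_lt (hg i)
    _ ≤ (Y ^ g i).order := le_order_pow_of_constantCoeff_eq_zero _ hY
    _ ≤ (a i * Y ^ g i).order := le_add_self.trans (le_order_mul _ _)

theorem multipliable_one_add_pow {Y : R⟦X⟧} (hY : constantCoeff Y = 0) {g : ℕ → ℕ}
    (hg : ∀ i, i < g i) : Multipliable fun i ↦ 1 + Y ^ g i := by
  simpa using multipliable_one_add_mul_pow hY 1 hg

theorem multipliable_one_sub_pow {Y : R⟦X⟧} (hY : constantCoeff Y = 0) {g : ℕ → ℕ}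
    (hg : ∀ i, i < g i) : Multipliable fun i ↦ 1 - Y ^ g i := by
  simpa [sub_eq_add_neg] using multipliable_one_add_mul_pow hY (-1) hg

theorem multipliable_ite_one_sub_pow {Y : R⟦X⟧} (hY : constantCoeff Y = 0) (p : ℕ → Prop)
    {g : ℕ → ℕ} (hg : ∀ i, i < g i) : Multipliable fun i ↦ if p i then 1 - Y ^ g i else 1 := by
  convert multipliable_one_add_mul_pow hY (fun i ↦ if p i then -1 else 0) hg using 2 with i
  split_ifs <;> ring

theorem isUnit_tprod_one_sub_pow [T2Space R] {Y : R⟦X⟧} (hY : constantCoeff Y = 0)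
    {g : ℕ → ℕ} (hg : ∀ i, i < g i) : IsUnit (∏' i, (1 - Y ^ g i)) := by
  rw [isUnit_iff_constantCoeff,
    (multipliable_one_sub_pow hY hg).map_tprod _ (continuous_constantCoeff R)]
  have h i : (1 : R) - 0 ^ g i = 1 := by rw [zero_pow (Nat.ne_zero_of_lt (hg i)), sub_zero]
  simp [hY, h]

variable [IsTopologicalRing R]

theorem hasSum_andrewsMultiplicities (r : ℕ) {Y : R⟦X⟧} (hY : constantCoeff Y = 0) :
    HasSum (fun c ↦ (if c ∈ andrewsMultiplicities r then (1 : R) else 0) • Y ^ c)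
      ((1 + Y ^ (2 * r + 1)) * ∑' k, (Y ^ 2) ^ k) := by
  have hG := (summable_pow_of_constantCoeff_eq_zero (f := Y ^ 2) (by simp [hY])).hasSum
  rw [add_mul, one_mul]
  refine HasSum.even_add_odd ?_ ((hasSum_nat_add_iff' r).mp ?_)
  · exact hG.congr_fun fun k ↦ by simp [andrewsMultiplicities, pow_mul]
  · have hlow : ∑ i ∈ range r,
        (if 2 * i + 1 ∈ andrewsMultiplicities r then (1 : R) else 0) • Y ^ (2 * i + 1) = 0 :=
      sum_eq_zero fun i hi ↦ by
        rw [mem_range] at hi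
        rw [if_neg fun h ↦ h ⟨odd_two_mul_add_one i, by omega⟩, zero_smul]
    rw [hlow, sub_zero]
    refine (hG.mul_left (Y ^ (2 * r + 1))).congr_fun fun k ↦ ?_
    rw [if_pos (show 2 * (k + r) + 1 ∈ andrewsMultiplicities r from fun h ↦ by
      have := h.2; omega), one_smul]
    ring

variable [T2Space R]

theorem one_add_tsum_andrewsMultiplicities_mul (r : ℕ) {Y : R⟦X⟧} (hY : constantCoeff Y = 0) :
    (1 + ∑' j, (if j + 1 ∈ andrewsMultiplicities r then (1 : R) else 0) • Y ^ (j + 1)) *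
      (1 - Y ^ 2) = 1 + Y ^ (2 * r + 1) := by
  have hA := hasSum_andrewsMultiplicities r hY
  have h0 : (if 0 ∈ andrewsMultiplicities r then (1 : R) else 0) • Y ^ 0 = 1 := by
    simp [andrewsMultiplicities]
  have hsplit := hA.summable.tsum_eq_zero_add
  rw [h0] at hsplit
  rw [← hsplit, hA.tsum_eq, mul_assoc,
    tsum_pow_mul_one_sub_of_constantCoeff_eq_zero (by simp [hY]), mul_one]

theorem one_add_tsum_pow_succ_mul_one_sub {Y : R⟦X⟧} (hY : constantCoeff Y = 0) :
    (1 + ∑' j, Y ^ (j + 1)) * (1 - Y) = 1 := by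
  have h := (summable_pow_of_constantCoeff_eq_zero hY).tsum_eq_zero_add
  rw [pow_zero] at h
  rw [← h, tsum_pow_mul_one_sub_of_constantCoeff_eq_zero hY]

theorem tprod_one_add_pow_mul_tprod_one_sub_pow_odd {Y : R⟦X⟧} (hY : constantCoeff Y = 0) :
    (∏' i, (1 + Y ^ (i + 1))) * ∏' i, (1 - Y ^ (2 * i + 1)) = 1 := by
  have hsplit := tprod_even_mul_odd (f := fun k ↦ 1 - Y ^ (k + 1))
    (multipliable_one_sub_pow hY fun i ↦ by omega) (multipliable_one_sub_pow hY fun i ↦ by omega)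
  refine (isUnit_tprod_one_sub_pow hY (g := fun i ↦ 2 * i + 1 + 1)
    fun i ↦ by omega).mul_left_cancel ?_
  calc (∏' i, (1 - Y ^ (2 * i + 1 + 1))) *
        ((∏' i, (1 + Y ^ (i + 1))) * ∏' i, (1 - Y ^ (2 * i + 1)))
      = (∏' i, (1 + Y ^ (i + 1))) * ∏' i, (1 - Y ^ (i + 1)) := by rw [← hsplit]; ring
    _ = ∏' i, (1 - Y ^ (2 * i + 1 + 1)) := by
      rw [← (multipliable_one_add_pow hY fun i ↦ by omega).tprod_mul
        (multipliable_one_sub_pow hY fun i ↦ by omega)]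
      exact tprod_congr fun i ↦ by ring
    _ = _ := (mul_one _).symm

theorem tprod_ite_mem_andrewsParts_one_sub_X_pow (r : ℕ) :
    ∏' i, (if i + 1 ∈ andrewsParts r then 1 - X ^ (i + 1) else (1 : R⟦X⟧)) =
      (∏' j, (1 - (X ^ (2 * r + 1)) ^ (2 * j + 1))) * ∏' i, (1 - X ^ (2 * (i + 1))) := by
  rw [← tprod_even_mul_odd
    (f := fun i ↦ if i + 1 ∈ andrewsParts r then 1 - X ^ (i + 1) else (1 : R⟦X⟧))
    (multipliable_ite_one_sub_pow constantCoeff_X (fun k ↦ 2 * k + 1 ∈ andrewsParts r)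
      (g := fun k ↦ 2 * k + 1) fun k ↦ by omega)
    (multipliable_ite_one_sub_pow constantCoeff_X (fun k ↦ 2 * k + 1 + 1 ∈ andrewsParts r)
      (g := fun k ↦ 2 * k + 1 + 1) fun k ↦ by omega)]
  congr 1
  · -- the odd parts in `andrewsParts r` are `(2r+1)(2j+1) = 2((2r+1)j + r) + 1`
    have hg : Function.Injective fun j ↦ (2 * r + 1) * j + r := fun a b h ↦
      Nat.eq_of_mul_eq_mul_left (by omega : 0 < 2 * r + 1) (by simpa using h)
    rw [← hg.tprod_eq (f := fun k ↦
      if 2 * k + 1 ∈ andrewsParts r then 1 - X ^ (2 * k + 1) else (1 : R⟦X⟧)) ?_]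
    · refine tprod_congr fun j ↦ ?_
      have hodd : 2 * ((2 * r + 1) * j + r) + 1 = (2 * r + 1) * (2 * j + 1) := by ring
      have hmem := (mem_andrewsParts_iff_of_odd (r := r) (hodd ▸ odd_two_mul_add_one _)).mpr
        (dvd_mul_right _ _)
      rw [hodd, if_pos hmem, pow_mul]
    · intro k hk
      have hmem : 2 * k + 1 ∈ andrewsParts r := by
        by_contra h
        exact hk (if_neg h)
      obtain ⟨m, hm⟩ := (mem_andrewsParts_iff_of_odd (odd_two_mul_add_one k)).mp hmem
      obtain ⟨j, rfl⟩ : Odd m := (Nat.odd_mul.mp (hm ▸ odd_two_mul_add_one k)).2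
      exact ⟨j, by dsimp only; linarith⟩
  · refine tprod_congr fun k ↦ ?_
    rw [if_pos (show 2 * k + 1 + 1 ∈ andrewsParts r from Or.inl ⟨k + 1, by ring⟩)]
    ring_nf

end PowerSeries.WithPiTopology

open Nat.Partition PowerSeries.WithPiTopology

section GenFun

variable {R : Type*} [CommRing R] [TopologicalSpace R] [IsTopologicalRing R] [T2Space R]

theorem genFun_andrewsMultiplicities_term_mul (r i : ℕ) :
    ((1 : R⟦X⟧) + ∑' j, (if j + 1 ∈ andrewsMultiplicities r then (1 : R) else 0) •
      X ^ ((i + 1) * (j + 1))) * (1 - X ^ (2 * (i + 1))) = 1 + (X ^ (2 * r + 1)) ^ (i + 1) := by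
  rw [pow_mul' X 2, pow_right_comm X (2 * r + 1)]
  simp_rw [pow_mul X (i + 1)]
  exact one_add_tsum_andrewsMultiplicities_mul r (by simp)

theorem genFun_andrewsParts_term_mul (r i : ℕ) :
    ((1 : R⟦X⟧) + ∑' j, (if i + 1 ∈ andrewsParts r then (1 : R) else 0) •
      X ^ ((i + 1) * (j + 1))) *
      (if i + 1 ∈ andrewsParts r then 1 - X ^ (i + 1) else 1) = 1 := by
  split_ifs
  · simp_rw [one_smul, pow_mul]
    exact one_add_tsum_pow_succ_mul_one_sub (by simp)
  · simp

theorem genFun_andrewsMultiplicities_eq_genFun_andrewsParts (r : ℕ) :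
    genFun (fun _ c ↦ if c ∈ andrewsMultiplicities r then (1 : R) else 0) =
      genFun fun i _ ↦ if i ∈ andrewsParts r then 1 else 0 := by
  set GA := genFun fun _ c ↦ if c ∈ andrewsMultiplicities r then (1 : R) else 0 with hGA
  set GB := genFun fun i _ ↦ if i ∈ andrewsParts r then (1 : R) else 0 with hGB
  set E : R⟦X⟧ := ∏' i, (1 - X ^ (2 * (i + 1))) with hE
  set O : R⟦X⟧ := ∏' j, (1 - (X ^ (2 * r + 1)) ^ (2 * j + 1)) with hO
  set D : R⟦X⟧ := ∏' i, (1 + (X ^ (2 * r + 1)) ^ (i + 1)) with hD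
  have hA : GA * E = D := by
    rw [hGA, genFun_eq_tprod, hE, ← (multipliable_genFun
      fun _ c ↦ if c ∈ andrewsMultiplicities r then (1 : R) else 0).tprod_mul
      (multipliable_one_sub_pow constantCoeff_X (g := fun i ↦ 2 * (i + 1)) fun i ↦ by omega)]
    exact tprod_congr fun i ↦ genFun_andrewsMultiplicities_term_mul r i
  have hB : GB * (O * E) = 1 := by
    rw [hGB, genFun_eq_tprod, hO, hE, ← tprod_ite_mem_andrewsParts_one_sub_X_pow,
      ← (multipliable_genFun fun i _ ↦ if i ∈ andrewsParts r then (1 : R) else 0).tprod_mul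
        (multipliable_ite_one_sub_pow constantCoeff_X (fun i ↦ i + 1 ∈ andrewsParts r)
          (g := fun i ↦ i + 1) fun i ↦ by omega)]
    exact (tprod_congr fun i ↦ genFun_andrewsParts_term_mul r i).trans tprod_one
  have hEuler : D * O = 1 := tprod_one_add_pow_mul_tprod_one_sub_pow_odd (by simp)
  refine (isUnit_tprod_one_sub_pow (constantCoeff_X (R := R)) (g := fun i ↦ 2 * (i + 1))
    fun i ↦ by omega).mul_right_cancel ?_
  linear_combination hA - D * hB + GB * E * hEuler

end GenFun

theorem andrews_general (r n : ℕ) :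
    partP {t | ¬ (Odd t ∧ t ≤ 2 * r - 1)} n
      = partQ {b | 2 ∣ b ∨ ((2 * r + 1) ∣ b ∧ ¬ (4 * r + 2) ∣ b)} n := by
  have h := congrArg (coeff n) (genFun_andrewsMultiplicities_eq_genFun_andrewsParts (R := ℤ) r)
  rw [← card_filter_eq_coeff_genFun, ← card_filter_eq_coeff_genFun] at h
  exact_mod_cast h

/-- Andrews: multiplicities avoiding {1,3,...,2r-1} vs parts even or odd multiples of 2r+1. -/
theorem andrews (r n : ℕ) (hr : 1 ≤ r) :
    partP {t | ¬ (Odd t ∧ t ≤ 2 * r - 1)} n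
      = partQ {b | 2 ∣ b ∨ ((2 * r + 1) ∣ b ∧ ¬ (4 * r + 2) ∣ b)} n :=
  andrews_general r n
end

section
/- Let l, r, a, p be positive integers with gcd(a, p) = 1. Then for all n, the number of partitions of n whose part multiplicities all lie in {pi + j(pr+a) : 0 ≤ i ≤ l−1, 0 ≤ j ≤ p−1} equals the number of partitions of n into parts lying in (pℕ \ lpℕ) ∪ ((pr+a)ℕ \ p(pr+a)ℕ). -/
/-!
Encode a partition by its multiplicity function. Since `p` and `q = pr + a` are coprime, every
allowed multiplicity is uniquely `p i + q j` with `i < l` and `j < p`, so a partition counted by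
`partP` splits into a pair of partitions, with multiplicities below `l` and below `p`, of sizes
`n₁, n₂` with `p n₁ + q n₂ = n`. Glaisher's theorem trades these for partitions into parts not
divisible by `l`, resp. `p`; multiplying their parts by `p`, resp. `q`, gives partitions into parts
from `pℕ \ lpℕ` and from `qℕ \ pqℕ`. These sets are disjoint by coprimality, so the pair is
recovered from the union of the two partitions, which is a partition counted by `partQ`.
-/

open scoped Classical

theorem exists_equiv_comp_eq_of_card_fiber_eq {α β γ : Type*} {f : α → γ} {g : β → γ}
    [∀ c, Finite {a // f a = c}] [∀ c, Finite {b // g b = c}]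
    (h : ∀ c, Nat.card {a // f a = c} = Nat.card {b // g b = c}) :
    ∃ e : α ≃ β, ∀ a, g (e a) = f a :=
  let e := fun c => (Finite.card_eq.1 (h c)).some
  ⟨.ofFiberEquiv e, Equiv.ofFiberEquiv_map e⟩

namespace Nat.Partition

open Finset Finsupp

/-- Multiplicity functions of partitions, `f k` being the number of parts equal to `k`,
in which every part `k` that occurs satisfies `P k (f k)`. The size of the partition is
`weight id f = ∑ k, f k * k`. -/
def multiplicities (P : ℕ → ℕ → Prop) : Set (ℕ →₀ ℕ) :=
  {f | f 0 = 0 ∧ ∀ k, f k ≠ 0 → P k (f k)}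

def countsIn (S : Set ℕ) : Set (ℕ →₀ ℕ) := multiplicities fun _ c => c ∈ S

def partsIn (B : Set ℕ) : Set (ℕ →₀ ℕ) := multiplicities fun k _ => k ∈ B

theorem weight_id_eq_sum_toMultiset (f : ℕ →₀ ℕ) : weight id f = (toMultiset f).sum := by
  rw [sum_toMultiset, weight_apply]
  rfl

noncomputable def equivMultiplicities (P : ℕ → ℕ → Prop) (n : ℕ) :
    {π : n.Partition // ∀ i ∈ π.parts, P i (π.parts.count i)} ≃
      {f : multiplicities P // weight id f.1 = n} where
  toFun π := ⟨⟨Multiset.toFinsupp π.1.parts, by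
      refine ⟨Multiset.count_eq_zero.2 fun h => (π.1.parts_pos h).false, fun k hk => ?_⟩
      rw [Multiset.toFinsupp_apply] at hk ⊢
      exact π.2 k (Multiset.count_ne_zero.1 hk)⟩, by
    simp [weight_id_eq_sum_toMultiset, π.1.parts_sum]⟩
  invFun f := ⟨⟨toMultiset f.1.1, fun hi => Nat.pos_of_ne_zero <| by
      rintro rfl
      exact mem_support_iff.1 ((mem_toMultiset _ _).1 hi) f.1.2.1,
      by rw [← weight_id_eq_sum_toMultiset, f.2]⟩, fun i hi => by
    simpa using f.1.2.2 i (by simpa using hi)⟩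
  left_inv π := by ext1; exact Nat.Partition.ext (by simp)
  right_inv f := by ext1; ext1; simp

theorem card_filter_eq_card_multiplicities (P : ℕ → ℕ → Prop) (n : ℕ) :
    #{π : n.Partition | ∀ i ∈ π.parts, P i (π.parts.count i)} =
      Nat.card {f : multiplicities P // weight id f.1 = n} := by
  rw [← Fintype.card_subtype, ← Nat.card_eq_fintype_card]
  exact Nat.card_congr (equivMultiplicities P n)

instance (P : ℕ → ℕ → Prop) (n : ℕ) : Finite {f : multiplicities P // weight id f.1 = n} :=
  .of_equiv _ (equivMultiplicities P n)

theorem exists_countsIn_Iio_equiv_partsIn_not_dvd {m : ℕ} (hm : 0 < m) :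
    ∃ e : countsIn (Set.Iio m) ≃ partsIn {k | ¬ m ∣ k},
      ∀ f, weight id (e f).1 = weight id f.1 := by
  refine exists_equiv_comp_eq_of_card_fiber_eq (f := fun f : multiplicities _ => weight id f.1)
    (g := fun f : multiplicities _ => weight id f.1) fun n => ?_
  rw [← card_filter_eq_card_multiplicities, ← card_filter_eq_card_multiplicities]
  convert (card_restricted_eq_card_countRestricted n hm).symm using 2 <;>
    exact Finset.filter_congr_decidable ..

theorem apply_mem_of_mem_countsIn {S : Set ℕ} (hS : 0 ∈ S) {f : ℕ →₀ ℕ} (hf : f ∈ countsIn S)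
    (k : ℕ) : f k ∈ S := by
  by_cases hk : f k = 0
  · rwa [hk]
  · exact hf.2 k hk

section CountsInProd

variable {p q : ℕ} {S T : Set ℕ}

noncomputable def countsInProdEquiv (hS : 0 ∈ S) (hT : 0 ∈ T)
    (hinj : Set.InjOn (fun x : ℕ × ℕ => p * x.1 + q * x.2) (S ×ˢ T)) :
    countsIn S × countsIn T ≃ countsIn ((fun x : ℕ × ℕ => p * x.1 + q * x.2) '' (S ×ˢ T)) :=
  let L := fun x : ℕ × ℕ => p * x.1 + q * x.2
  let ψ := Function.invFunOn L (S ×ˢ T)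
  have hψL : ∀ {i j}, i ∈ S → j ∈ T → ψ (L (i, j)) = (i, j) := fun hi hj =>
    hinj.leftInvOn_invFunOn ⟨hi, hj⟩
  have hψ0 : ψ 0 = (0, 0) := by simpa [L] using hψL hS hT
  have hg : ∀ g ∈ countsIn (L '' (S ×ˢ T)), ∀ k, ψ (g k) ∈ S ×ˢ T ∧ L (ψ (g k)) = g k :=
    fun g hg k =>
      have hk : g k ∈ L '' (S ×ˢ T) :=
        apply_mem_of_mem_countsIn (S := L '' (S ×ˢ T)) ⟨(0, 0), ⟨hS, hT⟩, by simp [L]⟩ hg k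
      ⟨Function.invFunOn_mem hk, Function.invFunOn_eq hk⟩
  { toFun x := ⟨p • x.1.1 + q • x.2.1, by simp [x.1.2.1, x.2.2.1], fun k _ =>
      ⟨(x.1.1 k, x.2.1 k), ⟨apply_mem_of_mem_countsIn hS x.1.2 k,
        apply_mem_of_mem_countsIn hT x.2.2 k⟩, by simp⟩⟩
    invFun g := (⟨mapRange (fun c => (ψ c).1) (by simp [hψ0]) g.1, by simp [g.2.1, hψ0],
        fun k _ => (hg g.1 g.2 k).1.1⟩,
      ⟨mapRange (fun c => (ψ c).2) (by simp [hψ0]) g.1, by simp [g.2.1, hψ0],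
        fun k _ => (hg g.1 g.2 k).1.2⟩)
    left_inv x := by
      have hx : ∀ k, ψ (p * x.1.1 k + q * x.2.1 k) = (x.1.1 k, x.2.1 k) := fun k =>
        hψL (apply_mem_of_mem_countsIn hS x.1.2 k) (apply_mem_of_mem_countsIn hT x.2.2 k)
      ext k <;> simp [hx]
    right_inv g := by
      ext k
      simpa [L] using (hg g.1 g.2 k).2 }

theorem weight_countsInProdEquiv (hS : 0 ∈ S) (hT : 0 ∈ T)
    (hinj : Set.InjOn (fun x : ℕ × ℕ => p * x.1 + q * x.2) (S ×ˢ T)) (x : countsIn S × countsIn T) :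
    weight id (countsInProdEquiv hS hT hinj x).1 = p * weight id x.1.1 + q * weight id x.2.1 := by
  simp [countsInProdEquiv]

end CountsInProd

noncomputable def partsInEquivImageMul {d : ℕ} (hd : d ≠ 0) (B : Set ℕ) :
    partsIn B ≃ partsIn ((d * ·) '' B) :=
  let e : ℕ ↪ ℕ := ⟨(d * ·), mul_right_injective₀ hd⟩
  { toFun f := ⟨embDomain e f.1, by simpa using embDomain_apply_self e f.1 0 ▸ f.2.1,
      fun k hk => by
        obtain ⟨i, rfl⟩ : k ∈ Set.range e := by
          by_contra h
          exact hk (embDomain_of_notMem_range _ _ _ h)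
        rw [embDomain_apply_self] at hk
        exact ⟨i, f.2.2 i hk, rfl⟩⟩
    invFun g := ⟨comapDomain e g.1 e.injective.injOn, by simpa [e] using g.2.1, fun k hk => by
        obtain ⟨i, hi, hik⟩ := g.2.2 (d * k) hk
        exact e.injective hik ▸ hi⟩
    left_inv f := Subtype.ext (comapDomain_embDomain e f.1)
    right_inv g := Subtype.ext <| embDomain_comapDomain fun k hk => by
      obtain ⟨i, -, rfl⟩ := g.2.2 k (mem_support_iff.1 hk)
      exact ⟨i, rfl⟩ }

theorem weight_partsInEquivImageMul {d : ℕ} (hd : d ≠ 0) {B : Set ℕ} (f : partsIn B) :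
    weight id (partsInEquivImageMul hd B f).1 = d * weight id f.1 := by
  simp only [partsInEquivImageMul, Equiv.coe_fn_mk, weight_apply, sum_embDomain, Finsupp.mul_sum]
  simp [mul_left_comm]

noncomputable def partsInProdEquivUnion {B₁ B₂ : Set ℕ} (h : Disjoint B₁ B₂) :
    partsIn B₁ × partsIn B₂ ≃ partsIn (B₁ ∪ B₂) where
  toFun x := ⟨x.1.1 + x.2.1, by simp [x.1.2.1, x.2.2.1], fun k hk => by
    by_cases h₁ : x.1.1 k = 0
    · exact .inr (x.2.2.2 k (by simpa [h₁] using hk))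
    · exact .inl (x.1.2.2 k h₁)⟩
  invFun g := (⟨g.1.filter (· ∈ B₁), by simp [filter_apply, g.2.1], fun k hk =>
      by_contra fun hB => hk (filter_apply_neg _ _ hB)⟩,
    ⟨g.1.filter (· ∉ B₁), by simp [filter_apply, g.2.1], fun k hk => by
      have hB : k ∉ B₁ := fun hB => hk (filter_apply_neg _ _ (not_not_intro hB))
      rw [filter_apply_pos (· ∉ B₁) _ hB] at hk
      exact (g.2.2 k hk).resolve_left hB⟩)
  left_inv x := by
    have h₁ : ∀ k ∈ B₁, x.2.1 k = 0 := fun k hk => by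
      by_contra h₂
      exact h.notMem_of_mem_left hk (x.2.2.2 k h₂)
    have h₂ : ∀ k ∉ B₁, x.1.1 k = 0 := fun k hk => by
      by_contra h₁
      exact hk (x.1.2.2 k h₁)
    ext k <;> by_cases hk : k ∈ B₁ <;> simp [hk, h₁, h₂]
  right_inv g := Subtype.ext (filter_add_filter_not g.1 (· ∈ B₁))

theorem weight_partsInProdEquivUnion {B₁ B₂ : Set ℕ} (h : Disjoint B₁ B₂)
    (x : partsIn B₁ × partsIn B₂) :
    weight id (partsInProdEquivUnion h x).1 = weight id x.1.1 + weight id x.2.1 :=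
  map_add _ _ _

theorem injOn_mul_add_mul {p q : ℕ} (hp : 0 < p) (hpq : Nat.Coprime p q) (S : Set ℕ) :
    Set.InjOn (fun x : ℕ × ℕ => p * x.1 + q * x.2) (S ×ˢ Set.Iio p) := by
  rintro ⟨i, j⟩ ⟨-, hj⟩ ⟨i', j'⟩ ⟨-, hj'⟩ h
  simp only at h
  have hjj' : j = j' := by
    have : q * j ≡ q * j' [MOD p] := by
      simpa [Nat.ModEq, Nat.mul_add_mod] using congrArg (· % p) h
    exact Nat.ModEq.eq_of_lt_of_lt (Nat.ModEq.cancel_left_of_coprime hpq this) hj hj'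
  subst hjj'
  simp [Nat.eq_of_mul_eq_mul_left hp (Nat.add_right_cancel h)]

theorem image_mul_setOf_not_dvd {d : ℕ} (hd : 0 < d) (m : ℕ) :
    (d * ·) '' {k | ¬ m ∣ k} = {b | d ∣ b ∧ ¬ m * d ∣ b} := by
  ext b
  constructor
  · rintro ⟨i, hi, rfl⟩
    exact ⟨dvd_mul_right d i, by rwa [mul_comm, Nat.mul_dvd_mul_iff_left hd]⟩
  · rintro ⟨⟨i, rfl⟩, hb⟩
    exact ⟨i, fun hi => hb (by rw [mul_comm]; exact mul_dvd_mul_left d hi), rfl⟩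

theorem setOf_eq_image_mul_add_mul (l p q : ℕ) :
    {x | ∃ i < l, ∃ j < p, x = p * i + j * q} =
      (fun x : ℕ × ℕ => p * x.1 + q * x.2) '' (Set.Iio l ×ˢ Set.Iio p) := by
  ext x
  simp [eq_comm, mul_comm q, and_assoc]

theorem disjoint_image_mul {l p q : ℕ} (hp : 0 < p) (hq : 0 < q) (hpq : Nat.Coprime p q) :
    Disjoint ((p * ·) '' {k | ¬ l ∣ k}) ((q * ·) '' {k | ¬ p ∣ k}) := by
  rw [image_mul_setOf_not_dvd hp, image_mul_setOf_not_dvd hq, Set.disjoint_left]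
  exact fun b hb hb' => hb'.2 (hpq.mul_dvd_of_dvd_of_dvd hb.1 hb'.1)

end Nat.Partition

open Nat.Partition Finsupp

theorem partP_eq_card_countsIn (A : Set ℕ) (n : ℕ) :
    partP A n = Nat.card {f : countsIn A // weight id f.1 = n} :=
  card_filter_eq_card_multiplicities _ n

theorem partQ_eq_card_partsIn (B : Set ℕ) (n : ℕ) :
    partQ B n = Nat.card {f : partsIn B // weight id f.1 = n} :=
  card_filter_eq_card_multiplicities (fun k _ => k ∈ B) n

theorem nyirenda_mugwangwavari_general (l r a p n : ℕ) (hl : 0 < l)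
    (ha : 0 < a) (hp : 0 < p) (hap : Nat.Coprime a p) :
    partP {x | ∃ i < l, ∃ j < p, x = p * i + j * (p * r + a)} n
      = partQ {b | (p ∣ b ∧ ¬ (l * p) ∣ b) ∨
          ((p * r + a) ∣ b ∧ ¬ (p * (p * r + a)) ∣ b)} n := by
  set q := p * r + a
  have hq : 0 < q := by omega
  have hpq : Nat.Coprime p q := by simpa [q, add_comm] using hap.symm
  obtain ⟨gl, hgl⟩ := exists_countsIn_Iio_equiv_partsIn_not_dvd hl
  obtain ⟨gp, hgp⟩ := exists_countsIn_Iio_equiv_partsIn_not_dvd hp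
  let split := countsInProdEquiv (Set.mem_Iio.2 hl) (Set.mem_Iio.2 hp) (injOn_mul_add_mul hp hpq _)
  let merge := ((gl.prodCongr gp).trans ((partsInEquivImageMul hp.ne' _).prodCongr
    (partsInEquivImageMul hq.ne' _))).trans (partsInProdEquivUnion (disjoint_image_mul hp hq hpq))
  have hsplit : ∀ x, weight id (split x).1 = p * weight id x.1.1 + q * weight id x.2.1 :=
    weight_countsInProdEquiv _ _ _
  have hmerge : ∀ x, weight id (merge x).1 = p * weight id x.1.1 + q * weight id x.2.1 := by
    simp [merge, weight_partsInProdEquivUnion, weight_partsInEquivImageMul, hgl, hgp]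
  rw [partP_eq_card_countsIn, partQ_eq_card_partsIn, setOf_eq_image_mul_add_mul, Set.ofPred_or,
    ← image_mul_setOf_not_dvd hp, ← image_mul_setOf_not_dvd hq]
  refine Nat.card_congr ((split.symm.trans merge).subtypeEquiv fun f => ?_)
  rw [Equiv.trans_apply, hmerge, ← hsplit, split.apply_symm_apply]

/-- Nyirenda–Mugwangwavari's theorem. -/
theorem nyirenda_mugwangwavari (l r a p n : ℕ) (hl : 0 < l) (hr : 0 < r)
    (ha : 0 < a) (hp : 0 < p) (hap : Nat.Coprime a p) :
    partP {x | ∃ i < l, ∃ j < p, x = p * i + j * (p * r + a)} n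
      = partQ {b | (p ∣ b ∧ ¬ (l * p) ∣ b) ∨
          ((p * r + a) ∣ b ∧ ¬ (p * (p * r + a)) ∣ b)} n :=
  nyirenda_mugwangwavari_general l r a p n hl ha hp hap
end

section
/- Let A ⊆ ℕ and let B ⊆ ℕ be finite, with positive integers δ_b for each b ∈ B. Suppose the formal power series identity 1 + Σ_{a∈A} x^a = Π_{b∈B} (1 − x^{bδ_b})/(1 − x^b) holds, and suppose the sets bℕ \ bδ_bℕ for b ∈ B are pairwise disjoint. Then for all n, P(A; n) = Q(B; n), where B := ∪_{b∈B} (bℕ \ bδ_bℕ). -/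
/-!
Both sides have infinite-product generating functions (`Nat.Partition.hasProd_genFun`):
`∑ P(A; n) xⁿ = ∏_{i ≥ 1} F(xⁱ)` with `F = 1 + ∑_{a ∈ A} xᵃ`, and `∑ Q(S; n) xⁿ = ∏_{m ∈ S} 1/(1 - xᵐ)`
for `S = ⋃_b (bℕ ∖ bδ_bℕ)`. Let `E = ∏_{b ∈ B} ∏_{i ≥ 1} (1 - x^{ib})`. Substituting `xⁱ` into the
hypothesis and multiplying over `i` gives `E · ∑ P(A; n) xⁿ = ∏_{b ∈ B} ∏_{i ≥ 1} (1 - x^{ibδ_b})`.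
Disjointness splits the product for `Q` into one factor per `b`, and for `c = bδ_b`
`∏_{m ∈ bℕ ∖ cℕ} 1/(1 - xᵐ) · ∏_{m ∈ bℕ} (1 - xᵐ) = ∏_{m ∈ cℕ} (1 - xᵐ)`, so `E · ∑ Q(S; n) xⁿ` is
the same product. As `E` has constant term `1`, it cancels in `ℤ⟦X⟧`.
-/

open scoped Classical

open Finset PowerSeries PowerSeries.WithPiTopology

theorem hasProd_comp_succ_mul_iff {α : Type*} [CommMonoid α] [TopologicalSpace α] {g : ℕ → α}
    {c : ℕ} (hc : c ≠ 0) {a : α} :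
    HasProd (fun i ↦ g ((i + 1) * c)) a ↔
      HasProd (fun j ↦ if c ∣ j + 1 then g (j + 1) else 1) a := by
  have hpos (i : ℕ) : 0 < (i + 1) * c := Nat.mul_pos i.succ_pos (Nat.pos_of_ne_zero hc)
  have hinj : Function.Injective fun i ↦ (i + 1) * c - 1 := fun i i' h ↦ by
    simpa [hc] using Nat.sub_one_cancel (hpos i) (hpos i') h
  rw [← hinj.hasProd_iff (f := fun j ↦ if c ∣ j + 1 then g (j + 1) else 1)]
  · simp [Function.comp_def, Nat.sub_add_cancel (hpos _)]
  · refine fun j hj ↦ if_neg ?_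
    rintro ⟨k, hk⟩
    have hk0 : 0 < k := Nat.pos_of_ne_zero (by rintro rfl; simp at hk)
    exact hj ⟨k - 1, by simp [Nat.sub_add_cancel hk0, mul_comm, ← hk]⟩

theorem ite_mem_biUnion_eq_prod {ι α M : Type*} [CommMonoid M] {B : Finset ι} {S : ι → Set α}
    (hS : (B : Set ι).PairwiseDisjoint S) (m : α) (x : M) :
    (if m ∈ ⋃ b ∈ B, S b then x else 1) = ∏ b ∈ B, if m ∈ S b then x else 1 := by
  split_ifs with hm
  · obtain ⟨b, hb, hmb⟩ := Set.mem_iUnion₂.1 hm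
    rw [prod_eq_single_of_mem b hb fun b' hb' hne ↦
      if_neg fun hmb' ↦ Set.disjoint_left.1 (hS hb hb' hne.symm) hmb hmb', if_pos hmb]
  · exact (prod_eq_one fun b hb ↦ if_neg fun hmb ↦ hm (Set.mem_biUnion hb hmb)).symm

section Semiring

variable {R : Type*} [CommSemiring R]

theorem mk_partP_eq_genFun (A : Set ℕ) :
    PowerSeries.mk (fun n ↦ (partP A n : R)) =
      Nat.Partition.genFun fun _ c ↦ if c ∈ A then (1 : R) else 0 := by
  simp_rw [Nat.Partition.genFun, partP, card_filter, Finsupp.prod, prod_boole]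
  simp

theorem hasProd_partQ [TopologicalSpace R] [IsTopologicalSemiring R] [T2Space R] (S : Set ℕ) :
    HasProd (fun i ↦ if i + 1 ∈ S then ∑' j : ℕ, X ^ ((i + 1) * j) else 1)
      (PowerSeries.mk fun n ↦ (partQ S n : R)) :=
  Nat.Partition.hasProd_powerSeriesMk_card_restricted R (· ∈ S)

variable (R) in
theorem mk_partQ_biUnion {ι : Type*} {B : Finset ι} {S : ι → Set ℕ}
    (hS : (B : Set ι).PairwiseDisjoint S) :
    PowerSeries.mk (fun n ↦ (partQ (⋃ b ∈ B, S b) n : R)) =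
      ∏ b ∈ B, PowerSeries.mk fun n ↦ (partQ (S b) n : R) := by
  let _ : TopologicalSpace R := ⊥
  have _ : DiscreteTopology R := ⟨rfl⟩
  refine (hasProd_partQ _).unique ((hasProd_prod fun b _ ↦ hasProd_partQ (S b)).congr_fun ?_)
  exact fun i ↦ ite_mem_biUnion_eq_prod hS _ _

theorem constantCoeff_eq_one_of_hasProd {ι : Type*} [TopologicalSpace R] [T2Space R]
    {f : ι → R⟦X⟧} {a : R⟦X⟧} (h : HasProd f a) (hf : ∀ i, constantCoeff (f i) = 1) :
    constantCoeff a = 1 :=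
  (h.map constantCoeff (continuous_constantCoeff R)).unique (hasProd_one.congr_fun hf)

end Semiring

section Ring

variable {R : Type*} [CommRing R] [TopologicalSpace R]

variable (R) in
theorem multipliable_one_sub_X_pow_succ_mul {c : ℕ} (hc : c ≠ 0) :
    Multipliable fun i ↦ (1 : R⟦X⟧) - X ^ ((i + 1) * c) := by
  nontriviality R
  simp_rw [sub_eq_add_neg]
  apply multipliable_one_add_of_tendsto_order_atTop_nhds_top
  refine ENat.tendsto_nhds_top_iff_natCast_lt.mpr fun n ↦ Filter.eventually_atTop.mpr ⟨n, ?_⟩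
  intro m hm
  rw [order_neg, order_X_pow]
  norm_cast
  nlinarith [Nat.one_le_iff_ne_zero.2 hc]

theorem hasSum_smul_X_pow_mul_succ {k : ℕ} (hk : k ≠ 0) {c : ℕ → R} (hc : c 0 = 0) :
    HasSum (fun j ↦ c (j + 1) • (X : R⟦X⟧) ^ (k * (j + 1))) (expand k hk (PowerSeries.mk c)) := by
  rw [hasSum_iff_hasSum_coeff]
  intro d
  simp only [coeff_smul, coeff_X_pow, coeff_expand, coeff_mk, smul_eq_mul, mul_ite, mul_one,
    mul_zero]
  by_cases hkd : k ∣ d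
  · obtain ⟨q, rfl⟩ := hkd
    rw [if_pos (dvd_mul_right k q), Nat.mul_div_cancel_left q (Nat.pos_of_ne_zero hk)]
    cases q with
    | zero => simp [hc, hk, hasSum_zero]
    | succ p =>
      convert hasSum_ite_eq p (c (p + 1)) using 2 with j
      simp only [hk, mul_eq_mul_left_iff, Nat.add_right_cancel_iff, or_false, eq_comm]
      split_ifs with h <;> simp [h]
  · rw [if_neg hkd]
    convert hasSum_zero with j
    exact if_neg (by rintro rfl; exact hkd (dvd_mul_right k _))

theorem hasProd_partP [T2Space R] {A : Set ℕ} (hA : 0 ∉ A) :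
    HasProd (fun i ↦ expand (i + 1) i.succ_ne_zero
        (1 + PowerSeries.mk fun a ↦ if a ∈ A then (1 : R) else 0))
      (PowerSeries.mk fun n ↦ (partP A n : R)) := by
  rw [mk_partP_eq_genFun]
  refine (Nat.Partition.hasProd_genFun _).congr_fun fun i ↦ ?_
  rw [map_add, map_one, (hasSum_smul_X_pow_mul_succ (k := i + 1) i.succ_ne_zero
    (c := fun a ↦ if a ∈ A then (1 : R) else 0) (by simp [hA])).tsum_eq]

variable [IsTopologicalRing R] [T2Space R]

theorem tsum_X_pow_mul_mul_one_sub_X_pow {k : ℕ} (hk : k ≠ 0) :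
    (∑' j : ℕ, (X : R⟦X⟧) ^ (k * j)) * (1 - X ^ k) = 1 := by
  simp_rw [pow_mul]
  exact tsum_pow_mul_one_sub_of_constantCoeff_eq_zero (by simp [hk])

theorem HasProd.mk_partQ_mul {b c : ℕ} (hb : b ≠ 0) (hc : c ≠ 0) (hbc : b ∣ c) {E : R⟦X⟧}
    (hE : HasProd (fun i ↦ 1 - X ^ ((i + 1) * b)) E) :
    HasProd (fun i ↦ 1 - X ^ ((i + 1) * c))
      ((PowerSeries.mk fun n ↦ (partQ {x | 0 < x ∧ b ∣ x ∧ ¬ c ∣ x} n : R)) * E) := by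
  rw [hasProd_comp_succ_mul_iff (g := fun m ↦ 1 - X ^ m) hc]
  rw [hasProd_comp_succ_mul_iff (g := fun m ↦ 1 - X ^ m) hb] at hE
  refine ((hasProd_partQ _).mul hE).congr_fun fun j ↦ ?_
  by_cases hcj : c ∣ j + 1
  · simp [hcj, hbc.trans hcj]
  · by_cases hbj : b ∣ j + 1
    · simp [hcj, hbj, tsum_X_pow_mul_mul_one_sub_X_pow]
    · simp [hcj, hbj]

end Ring

open PowerSeries in
/-- Key lemma: a geometric-series identity yields a partition identity. -/
theorem series_identity_to_partition_identity (A : Set ℕ) (hA : ∀ a ∈ A, 0 < a)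
    (B : Finset ℕ) (hB : ∀ b ∈ B, 0 < b) (δ : ℕ → ℕ) (hδ : ∀ b ∈ B, 0 < δ b)
    (hid : (1 + PowerSeries.mk (fun a => if a ∈ A then (1 : ℤ) else 0)) *
        ∏ b ∈ B, (1 - (PowerSeries.X : PowerSeries ℤ) ^ b)
      = ∏ b ∈ B, (1 - (PowerSeries.X : PowerSeries ℤ) ^ (b * δ b)))
    (hdisj : ∀ b ∈ B, ∀ b' ∈ B, b ≠ b' →
      {x : ℕ | 0 < x ∧ b ∣ x ∧ ¬ (b * δ b) ∣ x} ∩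
        {x : ℕ | 0 < x ∧ b' ∣ x ∧ ¬ (b' * δ b') ∣ x} = ∅)
    (n : ℕ) :
    partP A n = partQ (⋃ b ∈ B, {x : ℕ | 0 < x ∧ b ∣ x ∧ ¬ (b * δ b) ∣ x}) n := by
  have hE (b : ℕ) (hb : b ∈ B) :=
    (multipliable_one_sub_X_pow_succ_mul ℤ (hB b hb).ne').hasProd
  set E := ∏ b ∈ B, ∏' i, (1 - X ^ ((i + 1) * b) : ℤ⟦X⟧)
  have hP : HasProd (fun i ↦ ∏ b ∈ B, (1 - X ^ ((i + 1) * (b * δ b))))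
      (PowerSeries.mk (fun n ↦ (partP A n : ℤ)) * E) := by
    refine ((hasProd_partP fun h ↦ (hA 0 h).false).mul (hasProd_prod hE)).congr_fun fun i ↦ ?_
    simpa [map_prod, pow_mul] using (congrArg (expand (i + 1) i.succ_ne_zero) hid).symm
  have hQ : HasProd (fun i ↦ ∏ b ∈ B, (1 - X ^ ((i + 1) * (b * δ b))))
      (PowerSeries.mk (fun n ↦
        (partQ (⋃ b ∈ B, {x : ℕ | 0 < x ∧ b ∣ x ∧ ¬ (b * δ b) ∣ x}) n : ℤ)) * E) := by
    rw [mk_partQ_biUnion ℤ fun b hb b' hb' hne ↦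
      Set.disjoint_iff_inter_eq_empty.2 (hdisj b hb b' hb' hne), ← prod_mul_distrib]
    exact hasProd_prod fun b hb ↦ (hE b hb).mk_partQ_mul (hB b hb).ne'
      (Nat.mul_ne_zero (hB b hb).ne' (hδ b hb).ne') (dvd_mul_right b (δ b))
  have hE0 : E ≠ 0 := by
    refine ne_zero_of_map (f := constantCoeff) ?_
    rw [map_prod, prod_eq_one fun b hb ↦
      constantCoeff_eq_one_of_hasProd (hE b hb) fun i ↦ by simp [(hB b hb).ne']]
    exact one_ne_zero
  simpa using congrArg (coeff n) (mul_right_cancel₀ hE0 (hP.unique hQ))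
end

section
/- Let k, l, s be positive integers, m_1,...,m_s pairwise coprime positive integers, a_i coprime to m_i, m = m_1···m_s, M_i = m/m_i, and let r_i be positive integers with r_i ≡ a_i M_i \bar{M}_i (mod m) where \bar{M}_i M_i ≡ 1 (mod m_i). Define A = {r_1 j_1 + ... + r_s j_s + mk j_{s+1} : 0 ≤ j_i ≤ m_i − 1, 0 ≤ j_{s+1} ≤ l − 1} and B = (mkℕ \ mklℕ) ∪ ∪_{i=1}^s (r_iℕ \ r_i m_iℕ). Then for all n, the number of partitions of n with all multiplicities in A equals the number of partitions of n with all parts in B. -/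
open scoped Classical

/-!
Write `F S` for `∏_{x ∈ S} (1 - X ^ x)` and `dℕ` for the positive multiples of `d`. Reducing
modulo `m_i`, where `r_i ≡ a_i` is a unit while `m_i` divides `m k` and every `r_j` with `j ≠ i`,
shows that every element of `A` is `∑ r_i j_i + m k j_{s+1}` for exactly one digit vector `j`.
So, with weights `w = (r_1, …, r_s, m k)` and lengths `c = (m_1, …, m_s, l)`, the factor
`∑_{a ∈ A} X ^ (a i)` of the generating function of `P(A; n)` is `∏_t ∑_{j < c_t} X ^ (w_t i j)`,
and multiplying by `∏_t (1 - X ^ (w_t i))` telescopes each geometric sum: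
`(∑_n P(A; n) X ^ n) · ∏_t F (w_t ℕ) = ∏_t F (w_t c_t ℕ)`.
Finally `F (w ℕ) = F (w c ℕ) · F (w ℕ \ w c ℕ)`, and the blocks `w_t ℕ \ w_t c_t ℕ` are pairwise
disjoint (the block of `r_i` is the only one with elements not divisible by `m_i`), with union `B`.
Cancelling leaves `(∑_n P(A; n) X ^ n) · F B = 1`, and `1 / F B` generates `Q(B; n)`.
-/

open scoped PowerSeries.WithPiTopology
open PowerSeries Finset Function

def posMultiples (d : ℕ) : Set ℕ := {x | 0 < x ∧ d ∣ x}

def apSumset {ι : Type*} [Fintype ι] (w c : ι → ℕ) : Set ℕ :=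
  {x | ∃ j : ι → ℕ, (∀ t, j t < c t) ∧ x = ∑ t, w t * j t}

theorem posMultiples_mul_subset (d c : ℕ) : posMultiples (d * c) ⊆ posMultiples d :=
  fun _ hx => ⟨hx.1, (dvd_mul_right d c).trans hx.2⟩

theorem posMultiples_sdiff_mul (d c : ℕ) :
    posMultiples d \ posMultiples (d * c) = {x | 0 < x ∧ d ∣ x ∧ ¬ d * c ∣ x} := by
  ext x
  simp only [posMultiples, Set.mem_sdiff, Set.mem_ofPred_eq]
  tauto

section GeneratingFunctions

variable {R : Type*} [CommRing R]

theorem coeff_genFun_mem_eq_partP (A : Set ℕ) (n : ℕ) :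
    coeff n (Nat.Partition.genFun fun _ c => if c ∈ A then (1 : R) else 0) = partP A n := by
  simp_rw [Nat.Partition.coeff_genFun, partP, card_filter, Finsupp.prod, prod_boole]
  simp

variable [TopologicalSpace R]

theorem multipliable_one_sub_X_pow_subtype (S : Set ℕ) :
    Multipliable fun x : S => (1 : R⟦X⟧) - X ^ (x : ℕ) := by
  nontriviality R
  refine multipliable_subtype_iff_mulIndicator (f := fun x : ℕ => (1 : R⟦X⟧) - X ^ x) |>.2 ?_
  have h : S.mulIndicator (fun x => (1 : R⟦X⟧) - X ^ x) =
      fun x => 1 + S.indicator (fun x => -X ^ x) x := by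
    ext1 x
    by_cases hx : x ∈ S <;> simp [hx, sub_eq_add_neg]
  rw [h]
  refine WithPiTopology.multipliable_one_add_of_tendsto_order_atTop_nhds_top R ?_
  refine ENat.tendsto_nhds_top_iff_natCast_lt.2 fun N => Filter.eventually_atTop.2 ⟨N + 1, ?_⟩
  intro x hx
  by_cases hxS : x ∈ S
  · simp only [hxS, Set.indicator_of_mem, order_neg, order_X_pow, Nat.cast_lt]
    omega
  · simp [hxS]

theorem hasProd_one_sub_X_pow_mul_succ {d : ℕ} (hd : 0 < d) :
    HasProd (fun i : ℕ => (1 : R⟦X⟧) - X ^ (d * (i + 1)))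
      (∏' x : posMultiples d, (1 - X ^ (x : ℕ))) := by
  let g : ℕ → posMultiples d := fun i => ⟨d * (i + 1), by positivity, dvd_mul_right _ _⟩
  have hg : Injective g := fun i j h => by
    simpa [g, hd.ne'] using congrArg Subtype.val h
  refine (hg.hasProd_iff fun x hx => absurd ?_ hx).2 (multipliable_one_sub_X_pow_subtype _).hasProd
  obtain ⟨x, hx0, q, rfl⟩ := x
  have hq : q ≠ 0 := by rintro rfl; simp at hx0
  exact ⟨q - 1, Subtype.ext (by simp [g, Nat.sub_add_cancel (Nat.one_le_iff_ne_zero.2 hq)])⟩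

variable [T2Space R]

theorem constantCoeff_tprod_one_sub_X_pow {S : Set ℕ} (hS : 0 ∉ S) :
    constantCoeff (∏' x : S, ((1 : R⟦X⟧) - X ^ (x : ℕ))) = 1 := by
  rw [(multipliable_one_sub_X_pow_subtype S).map_tprod _
    (WithPiTopology.continuous_constantCoeff R)]
  refine (tprod_congr fun x : S => ?_).trans tprod_one
  have hx : (x : ℕ) ≠ 0 := fun h => hS (h ▸ x.2)
  simp [hx]

variable [IsTopologicalRing R]

theorem tprod_one_sub_X_pow_eq_mul_sdiff {S T : Set ℕ} (hTS : T ⊆ S) :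
    ∏' x : S, ((1 : R⟦X⟧) - X ^ (x : ℕ)) =
      (∏' x : T, (1 - X ^ (x : ℕ))) * ∏' x : ↑(S \ T), (1 - X ^ (x : ℕ)) := by
  conv_lhs => rw [← Set.union_sdiff_cancel hTS]
  exact Multipliable.tprod_union_disjoint (f := fun x : ℕ => (1 : R⟦X⟧) - X ^ x)
    Set.disjoint_sdiff_right (multipliable_one_sub_X_pow_subtype _)
    (multipliable_one_sub_X_pow_subtype _)

theorem one_add_tsum_ite_mem_eq_sum (A : Finset ℕ) (h0 : 0 ∈ A) (i : ℕ) :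
    (1 : R⟦X⟧) + ∑' j, (if j + 1 ∈ A then (1 : R) else 0) • X ^ (i * (j + 1)) =
      ∑ n ∈ A, X ^ (i * n) := by
  have hsummable : Summable fun n => if n ∈ A then (X : R⟦X⟧) ^ (i * n) else 0 :=
    summable_of_hasFiniteSupport <| A.finite_toSet.subset fun n hn => by
      by_contra h; exact hn (if_neg h)
  have hsum : ∑' n, (if n ∈ A then (X : R⟦X⟧) ^ (i * n) else 0) = ∑ n ∈ A, X ^ (i * n) := by
    rw [tsum_eq_sum fun n hn => if_neg hn]
    exact sum_congr rfl fun n hn => if_pos hn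
  simp only [ite_smul, one_smul, zero_smul]
  rw [← hsum, hsummable.tsum_eq_zero_add, if_pos h0, mul_zero, pow_zero]

variable {ι : Type*} [Fintype ι] {w c : ι → ℕ}

theorem hasProd_genFun_apSumset (hc : ∀ t, 0 < c t)
    (hrep : Set.InjOn (fun j : ι → ℕ => ∑ t, w t * j t) {j | ∀ t, j t < c t}) :
    HasProd (fun i => ∏ t, ∑ j ∈ range (c t), (X ^ (w t * (i + 1))) ^ j)
      (Nat.Partition.genFun fun _ n => if n ∈ apSumset w c then (1 : R) else 0) := by
  set J := Fintype.piFinset fun t => range (c t)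
  have hA : ∀ x, x ∈ apSumset w c ↔ x ∈ J.image fun j => ∑ t, w t * j t := by
    simp [apSumset, J, eq_comm]
  refine (Nat.Partition.hasProd_genFun _).congr_fun fun i => ?_
  simp only [hA]
  rw [one_add_tsum_ite_mem_eq_sum _ ((hA 0).1 ⟨0, hc, by simp⟩), sum_image, prod_univ_sum]
  · refine sum_congr rfl fun j _ => ?_
    simp_rw [← pow_mul, prod_pow_eq_pow_sum, mul_sum]
    exact congrArg _ (sum_congr rfl fun t _ => by ring)
  · exact hrep.mono fun j hj => by simpa [J] using hj

theorem genFun_apSumset_mul_prod_tprod (hw : ∀ t, 0 < w t) (hc : ∀ t, 0 < c t)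
    (hrep : Set.InjOn (fun j : ι → ℕ => ∑ t, w t * j t) {j | ∀ t, j t < c t}) :
    Nat.Partition.genFun (fun _ n => if n ∈ apSumset w c then (1 : R) else 0) *
        ∏ t, ∏' x : posMultiples (w t), (1 - X ^ (x : ℕ)) =
      ∏ t, ∏' x : posMultiples (w t * c t), (1 - X ^ (x : ℕ)) := by
  have hU := hasProd_prod fun t (_ : t ∈ univ) => hasProd_one_sub_X_pow_mul_succ (R := R) (hw t)
  have hV := hasProd_prod fun t (_ : t ∈ univ) =>
    hasProd_one_sub_X_pow_mul_succ (R := R) (mul_pos (hw t) (hc t))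
  refine ((hasProd_genFun_apSumset hc hrep).mul hU).unique (hV.congr_fun fun i => ?_)
  rw [← prod_mul_distrib]
  refine prod_congr rfl fun t _ => ?_
  rw [geom_sum_mul_neg, ← pow_mul, mul_right_comm]

theorem partQ_eq_card_restricted (B : Set ℕ) (n : ℕ) :
    partQ B n = #(Nat.Partition.restricted n (· ∈ B)) := by
  unfold partQ Nat.Partition.restricted
  convert rfl

theorem mk_partQ_mul_tprod_one_sub_X_pow {B : Set ℕ} (hB : 0 ∉ B) :
    PowerSeries.mk (fun n => (partQ B n : R)) * ∏' x : B, (1 - X ^ (x : ℕ)) = 1 := by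
  have hQ := Nat.Partition.hasProd_powerSeriesMk_card_restricted R (· ∈ B)
  have hE : HasProd (fun i => B.mulIndicator (fun x => (1 : R⟦X⟧) - X ^ x) (i + 1))
      (∏' x : B, (1 - X ^ (x : ℕ))) := by
    rw [_root_.tprod_subtype B fun x => (1 : R⟦X⟧) - X ^ x]
    have hmul := (multipliable_subtype_iff_mulIndicator
      (f := fun x : ℕ => (1 : R⟦X⟧) - X ^ x)).1 (multipliable_one_sub_X_pow_subtype B)
    refine (Nat.succ_injective.hasProd_iff fun x hx => ?_).2 hmul.hasProd
    have hx0 : x = 0 := by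
      by_contra h
      exact hx ⟨x - 1, Nat.succ_pred_eq_of_ne_zero h⟩
    simp [hx0, hB]
  simp_rw [partQ_eq_card_restricted]
  refine (hQ.mul hE).unique (hasProd_one.congr_fun fun i => ?_)
  by_cases hi : i + 1 ∈ B
  · simp [hi, pow_mul, WithPiTopology.tsum_pow_mul_one_sub_of_constantCoeff_eq_zero]
  · simp [hi]

end GeneratingFunctions

theorem partP_apSumset_eq_partQ {ι : Type*} [Fintype ι] {w c : ι → ℕ} (hw : ∀ t, 0 < w t)
    (hc : ∀ t, 0 < c t)
    (hrep : Set.InjOn (fun j : ι → ℕ => ∑ t, w t * j t) {j | ∀ t, j t < c t})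
    (hdisj : Pairwise (Disjoint on fun t => posMultiples (w t) \ posMultiples (w t * c t)))
    (n : ℕ) :
    partP (apSumset w c) n = partQ (⋃ t, posMultiples (w t) \ posMultiples (w t * c t)) n := by
  set piece := fun t => posMultiples (w t) \ posMultiples (w t * c t)
  set G : ℤ⟦X⟧ := Nat.Partition.genFun fun _ n => if n ∈ apSumset w c then 1 else 0
  set Q : ℤ⟦X⟧ := PowerSeries.mk fun n => (partQ (⋃ t, piece t) n : ℤ)
  set V : ℤ⟦X⟧ := ∏ t, ∏' x : posMultiples (w t * c t), (1 - X ^ (x : ℕ))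
  set EB : ℤ⟦X⟧ := ∏' x : ↑(⋃ t, piece t), (1 - X ^ (x : ℕ))
  have hEB : EB = ∏ t, ∏' x : piece t, (1 - X ^ (x : ℕ)) := by
    have h := Multipliable.tprod_finset_bUnion_disjoint (s := univ)
      (f := fun x : ℕ => (1 : ℤ⟦X⟧) - X ^ x) (hdisj.set_pairwise _)
      fun t _ => multipliable_one_sub_X_pow_subtype (piece t)
    rwa [show (⋃ t ∈ (univ : Finset ι), piece t) = ⋃ t, piece t by simp] at h
  have hG : G * (V * EB) = V := by
    rw [hEB, ← prod_mul_distrib]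
    simp only [piece, ← tprod_one_sub_X_pow_eq_mul_sdiff (posMultiples_mul_subset _ _)]
    exact genFun_apSumset_mul_prod_tprod hw hc hrep
  have hQ : Q * EB = 1 := mk_partQ_mul_tprod_one_sub_X_pow (by simp [piece, posMultiples])
  have hV : V ≠ 0 := fun h => by
    simpa [V, map_prod, constantCoeff_tprod_one_sub_X_pow, posMultiples] using
      congrArg constantCoeff h
  have hGQ : G = Q := mul_right_cancel₀ hV (by linear_combination Q * hG - G * V * hQ)
  exact_mod_cast (coeff_genFun_mem_eq_partP _ n).symm.trans
    ((congrArg (coeff n) hGQ).trans (coeff_mk _ _))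

section Option

/- The index `none` carries the weight `m k` and the digit bound `l`. -/

variable {ι : Type*} {m r : ι → ℕ} {d l : ℕ}

theorem apSumset_option_elim [Fintype ι] (hm : ∀ t, 0 < m t) (hl : 0 < l) :
    {x | ∃ j : ι → ℕ, ∃ js : ℕ, (∀ t, j t ≤ m t - 1) ∧ js ≤ l - 1 ∧
        x = (∑ t, r t * j t) + d * js} =
      apSumset (fun o : Option ι => o.elim d r) (fun o => o.elim l m) := by
  ext x
  constructor
  · rintro ⟨j, js, hj, hjs, rfl⟩
    refine ⟨fun o => o.elim js j, ?_, by simp [Fintype.sum_option, add_comm]⟩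
    rintro (_ | t)
    · simpa using Nat.lt_of_le_pred hl hjs
    · simpa using Nat.lt_of_le_pred (hm t) (hj t)
  · rintro ⟨j, hj, rfl⟩
    refine ⟨fun t => j (some t), j none, fun t => Nat.le_pred_of_lt (hj (some t)),
      Nat.le_pred_of_lt (hj none), by simp [Fintype.sum_option, add_comm]⟩

theorem sum_option_elim_modEq [Fintype ι] [DecidableEq ι] (hmd : ∀ t, m t ∣ d)
    (hdvd : ∀ t u, t ≠ u → m u ∣ r t) (j : Option ι → ℕ) (u : ι) :
    ∑ o, o.elim d r * j o ≡ r u * j (some u) [MOD m u] := by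
  have hrest : m u ∣ d * j none + ∑ t ∈ univ.erase u, r t * j (some t) :=
    dvd_add (dvd_mul_of_dvd_left (hmd u) _) <| dvd_sum fun t ht =>
      dvd_mul_of_dvd_left (hdvd t u (ne_of_mem_erase ht)) _
  rw [Fintype.sum_option, ← add_sum_erase _ _ (mem_univ u)]
  simpa [add_comm, add_left_comm] using (Nat.modEq_zero_iff_dvd.2 hrest).add_left (r u * j (some u))

theorem injOn_sum_option_elim [Fintype ι] [DecidableEq ι] (hd : 0 < d) (hmd : ∀ t, m t ∣ d)
    (hcopr : ∀ t, Nat.Coprime (r t) (m t)) (hdvd : ∀ t u, t ≠ u → m u ∣ r t) :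
    Set.InjOn (fun j : Option ι → ℕ => ∑ o, o.elim d r * j o) {j | ∀ o, j o < o.elim l m} := by
  intro j hj j' hj' (h : ∑ o, o.elim d r * j o = ∑ o, o.elim d r * j' o)
  have hsome : ∀ u, j (some u) = j' (some u) := fun u => by
    have hu := sum_option_elim_modEq hmd hdvd j u
    rw [h] at hu
    exact ((hu.symm.trans (sum_option_elim_modEq hmd hdvd j' u)).cancel_left_of_coprime
      (hcopr u).symm).eq_of_lt_of_lt (hj (some u)) (hj' (some u))
  have hnone : j none = j' none := by
    simp only [Fintype.sum_option, Option.elim, hsome] at h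
    exact Nat.eq_of_mul_eq_mul_left hd (Nat.add_right_cancel h)
  funext o
  cases o with
  | none => exact hnone
  | some u => exact hsome u

theorem pairwise_disjoint_option_elim (hmd : ∀ t, m t ∣ d)
    (hcopr : ∀ t, Nat.Coprime (r t) (m t)) (hdvd : ∀ t u, t ≠ u → m u ∣ r t) :
    Pairwise (Disjoint on fun o : Option ι =>
      posMultiples (o.elim d r) \ posMultiples (o.elim d r * o.elim l m)) := by
  have hnot : ∀ t x, x ∈ posMultiples (r t) \ posMultiples (r t * m t) → ¬ m t ∣ x :=
    fun t x ⟨⟨hx0, hrx⟩, hx⟩ hmx => hx ⟨hx0, (hcopr t).mul_dvd_of_dvd_of_dvd hrx hmx⟩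
  have hdv : ∀ t (o : Option ι) x, o ≠ some t →
      x ∈ posMultiples (o.elim d r) \ posMultiples (o.elim d r * o.elim l m) → m t ∣ x := by
    rintro t (_ | u) x hne ⟨⟨-, hx⟩, -⟩
    · exact (hmd t).trans hx
    · exact (hdvd u t fun h => hne (h ▸ rfl)).trans hx
  rintro (_ | t) o' hne <;> refine Set.disjoint_left.2 fun x hx hx' => ?_
  · cases o' with
    | none => exact hne rfl
    | some t => exact hnot t x hx' (hdv t none x (by simp) hx)
  · exact hnot t x hx (hdv t o' x (Ne.symm hne) hx')

end Option

section CRT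

variable {s : ℕ} {m a r Mbar : Fin s → ℕ}

theorem modEq_of_crt (hinv : ∀ i, Mbar i * ((∏ t, m t) / m i) ≡ 1 [MOD m i])
    (hri : ∀ i, r i ≡ a i * ((∏ t, m t) / m i) * Mbar i [MOD (∏ t, m t)]) (t : Fin s) :
    r t ≡ a t [MOD m t] := by
  have h := (hri t).of_dvd (dvd_prod_of_mem m (mem_univ t))
  rw [mul_assoc, mul_comm ((∏ u, m u) / m t)] at h
  simpa using h.trans ((hinv t).mul_left (a t))

theorem coprime_of_crt (hacop : ∀ i, Nat.Coprime (a i) (m i))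
    (hinv : ∀ i, Mbar i * ((∏ t, m t) / m i) ≡ 1 [MOD m i])
    (hri : ∀ i, r i ≡ a i * ((∏ t, m t) / m i) * Mbar i [MOD (∏ t, m t)]) (t : Fin s) :
    Nat.Coprime (r t) (m t) :=
  (modEq_of_crt hinv hri t).gcd_eq.trans (hacop t)

theorem dvd_of_crt (hcop : ∀ i j, i ≠ j → Nat.Coprime (m i) (m j))
    (hri : ∀ i, r i ≡ a i * ((∏ t, m t) / m i) * Mbar i [MOD (∏ t, m t)]) {t u : Fin s}
    (htu : t ≠ u) : m u ∣ r t := by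
  have hu : m u ∣ (∏ v, m v) / m t := by
    refine (hcop u t htu.symm).dvd_of_dvd_mul_left ?_
    rw [Nat.mul_div_cancel' (dvd_prod_of_mem m (mem_univ t))]
    exact dvd_prod_of_mem m (mem_univ u)
  exact ((hri t).dvd_iff (dvd_prod_of_mem m (mem_univ u))).2
    (dvd_mul_of_dvd_left (dvd_mul_of_dvd_right hu _) _)

end CRT

theorem main_crt_partition_general (k l s : ℕ) (hk : 0 < k) (hl : 0 < l)
    (m a r Mbar : Fin s → ℕ)
    (hm : ∀ i, 0 < m i) (hr : ∀ i, 0 < r i)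
    (hcop : ∀ i j, i ≠ j → Nat.Coprime (m i) (m j))
    (hacop : ∀ i, Nat.Coprime (a i) (m i))
    (hinv : ∀ i, Mbar i * ((∏ t, m t) / m i) ≡ 1 [MOD m i])
    (hri : ∀ i, r i ≡ a i * ((∏ t, m t) / m i) * Mbar i [MOD (∏ t, m t)]) (n : ℕ) :
    partP {x | ∃ j : Fin s → ℕ, ∃ js : ℕ,
        (∀ i, j i ≤ m i - 1) ∧ js ≤ l - 1 ∧
        x = (∑ i, r i * j i) + (∏ t, m t) * k * js} n
      = partQ ({x | 0 < x ∧ (∏ t, m t) * k ∣ x ∧ ¬ (∏ t, m t) * k * l ∣ x}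
          ∪ ⋃ i, {x | 0 < x ∧ r i ∣ x ∧ ¬ r i * m i ∣ x}) n := by
  have hd : 0 < (∏ t, m t) * k := mul_pos (prod_pos fun t _ => hm t) hk
  have hmd : ∀ t, m t ∣ (∏ u, m u) * k := fun t => (dvd_prod_of_mem m (mem_univ t)).mul_right k
  have hcopr := coprime_of_crt hacop hinv hri
  have hdvd : ∀ t u, t ≠ u → m u ∣ r t := fun _ _ => dvd_of_crt hcop hri
  have hB : ⋃ o : Option (Fin s), posMultiples (o.elim ((∏ t, m t) * k) r) \
      posMultiples (o.elim ((∏ t, m t) * k) r * o.elim l m) =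
        {x | 0 < x ∧ (∏ t, m t) * k ∣ x ∧ ¬ (∏ t, m t) * k * l ∣ x} ∪
          ⋃ i, {x | 0 < x ∧ r i ∣ x ∧ ¬ r i * m i ∣ x} := by
    simp only [Set.iUnion_option, Option.elim, posMultiples_sdiff_mul]
  rw [apSumset_option_elim hm hl, ← hB]
  refine partP_apSumset_eq_partQ ?_ ?_ (injOn_sum_option_elim hd hmd hcopr hdvd)
    (pairwise_disjoint_option_elim hmd hcopr hdvd) n
  · rintro (_ | t)
    exacts [hd, hr t]
  · rintro (_ | t)
    exacts [hl, hm t]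

/-- Main theorem (CRT partition theorem). -/
theorem main_crt_partition (k l s : ℕ) (hk : 0 < k) (hl : 0 < l) (hs : 0 < s)
    (m a r Mbar : Fin s → ℕ)
    (hm : ∀ i, 0 < m i) (ha : ∀ i, 0 < a i) (hr : ∀ i, 0 < r i)
    (hMbar : ∀ i, 0 < Mbar i)
    (hcop : ∀ i j, i ≠ j → Nat.Coprime (m i) (m j))
    (hacop : ∀ i, Nat.Coprime (a i) (m i))
    (hinv : ∀ i, Mbar i * ((∏ t, m t) / m i) ≡ 1 [MOD m i])
    (hri : ∀ i, r i ≡ a i * ((∏ t, m t) / m i) * Mbar i [MOD (∏ t, m t)]) (n : ℕ) :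
    partP {x | ∃ j : Fin s → ℕ, ∃ js : ℕ,
        (∀ i, j i ≤ m i - 1) ∧ js ≤ l - 1 ∧
        x = (∑ i, r i * j i) + (∏ t, m t) * k * js} n
      = partQ ({x | 0 < x ∧ (∏ t, m t) * k ∣ x ∧ ¬ (∏ t, m t) * k * l ∣ x}
          ∪ ⋃ i, {x | 0 < x ∧ r i ∣ x ∧ ¬ r i * m i ∣ x}) n :=
  main_crt_partition_general k l s hk hl m a r Mbar hm hr hcop hacop hinv hri n
end

section
/- Under the hypotheses of the main theorem (pairwise coprime m_i, gcd(a_i, m_i) = 1, r_i ≡ a_i M_i \bar{M}_i (mod m)), the elements r_1 j_1 + r_2 j_2 + ... + r_s j_s + mk j_{s+1} with 0 ≤ j_i ≤ m_i − 1 and 0 ≤ j_{s+1} ≤ l − 1 are pairwise distinct; i.e., if two such sums are equal then j_i = j_i' for all i = 1, ..., s+1. -/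
/-- The sums defining the multiplicity set are pairwise distinct. -/
theorem crt_sums_distinct (k l s : ℕ) (hk : 0 < k) (hl : 0 < l) (hs : 0 < s)
    (m a r Mbar : Fin s → ℕ)
    (hm : ∀ i, 0 < m i) (ha : ∀ i, 0 < a i) (hr : ∀ i, 0 < r i)
    (hMbar : ∀ i, 0 < Mbar i)
    (hcop : ∀ i j, i ≠ j → Nat.Coprime (m i) (m j))
    (hacop : ∀ i, Nat.Coprime (a i) (m i))
    (hinv : ∀ i, Mbar i * ((∏ t, m t) / m i) ≡ 1 [MOD m i])
    (hri : ∀ i, r i ≡ a i * ((∏ t, m t) / m i) * Mbar i [MOD (∏ t, m t)])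
    (j j' : Fin s → ℕ) (js js' : ℕ)
    (hj : ∀ i, j i ≤ m i - 1) (hj' : ∀ i, j' i ≤ m i - 1)
    (hjs : js ≤ l - 1) (hjs' : js' ≤ l - 1)
    (heq : (∑ i, r i * j i) + (∏ t, m t) * k * js
        = (∑ i, r i * j' i) + (∏ t, m t) * k * js') :
    j = j' ∧ js = js' := by
  classical
  set M := ∏ t, m t with hM
  have hMpos : 0 < M := Finset.prod_pos (fun i _ => hm i)
  have hdvd : ∀ i, m i ∣ M := fun i => Finset.dvd_prod_of_mem m (Finset.mem_univ i)
  have hdvd2 : ∀ i i', i ≠ i' → m i ∣ M / m i' := by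
    intro i i' hne
    have h1 : M = m i' * ∏ t ∈ Finset.univ.erase i', m t :=
      (Finset.mul_prod_erase _ _ (Finset.mem_univ i')).symm
    have h2 : M / m i' = ∏ t ∈ Finset.univ.erase i', m t := by
      rw [h1, Nat.mul_div_cancel_left _ (hm i')]
    rw [h2]
    exact Finset.dvd_prod_of_mem m (Finset.mem_erase.mpr ⟨hne, Finset.mem_univ i⟩)
  have hjeq : j = j' := by
    funext i
    haveI : NeZero (m i) := ⟨(hm i).ne'⟩
    -- cast facts in ZMod (m i)
    have hM0 : ((M : ℕ) : ZMod (m i)) = 0 :=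
      (ZMod.natCast_eq_zero_iff _ _).mpr (hdvd i)
    have hrt0 : ∀ t, t ≠ i → ((r t : ℕ) : ZMod (m i)) = 0 := by
      intro t ht
      have h1 : r t ≡ a t * (M / m t) * Mbar t [MOD m i] :=
        (hri t).of_dvd (hdvd i)
      have h2 : ((r t : ℕ) : ZMod (m i)) = ((a t * (M / m t) * Mbar t : ℕ) : ZMod (m i)) :=
        (ZMod.natCast_eq_natCast_iff _ _ _).mpr h1
      have h3 : ((M / m t : ℕ) : ZMod (m i)) = 0 :=
        (ZMod.natCast_eq_zero_iff _ _).mpr (hdvd2 i t ht.symm)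
      rw [h2]; push_cast; rw [h3]; ring
    have hrti : ((r i : ℕ) : ZMod (m i)) = ((a i : ℕ) : ZMod (m i)) := by
      have h1 : r i ≡ a i * (M / m i) * Mbar i [MOD m i] :=
        (hri i).of_dvd (hdvd i)
      have h2 : ((r i : ℕ) : ZMod (m i)) = ((a i * (M / m i) * Mbar i : ℕ) : ZMod (m i)) :=
        (ZMod.natCast_eq_natCast_iff _ _ _).mpr h1
      have h3 : ((Mbar i * (M / m i) : ℕ) : ZMod (m i)) = ((1 : ℕ) : ZMod (m i)) :=
        (ZMod.natCast_eq_natCast_iff _ _ _).mpr (hinv i)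
      rw [h2]
      push_cast at h3 ⊢
      calc (a i : ZMod (m i)) * ((M / m i : ℕ) : ZMod (m i)) * (Mbar i : ZMod (m i))
          = (a i : ZMod (m i)) * ((Mbar i : ZMod (m i)) * ((M / m i : ℕ) : ZMod (m i))) := by ring
        _ = (a i : ZMod (m i)) := by rw [h3]; ring
    have hsum : ∀ (f : Fin s → ℕ),
        ((∑ t, r t * f t : ℕ) : ZMod (m i)) = (a i : ZMod (m i)) * (f i : ZMod (m i)) := by
      intro f
      push_cast
      rw [Finset.sum_eq_single i]
      · rw [hrti]
      · intro t _ ht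
        rw [hrt0 t ht]; ring
      · intro h; exact absurd (Finset.mem_univ i) h
    have hcast : ((∑ t, r t * j t) + M * k * js : ℕ) = (((∑ t, r t * j' t) + M * k * js' : ℕ)) := heq
    have H : ((((∑ t, r t * j t) + M * k * js : ℕ)) : ZMod (m i))
        = ((((∑ t, r t * j' t) + M * k * js' : ℕ)) : ZMod (m i)) := by rw [hcast]
    push_cast at H
    rw [hM0] at H
    simp only [zero_mul, add_zero] at H
    have H2 : (a i : ZMod (m i)) * (j i : ZMod (m i)) = (a i : ZMod (m i)) * (j' i : ZMod (m i)) := by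
      have h1 := hsum j
      have h2 := hsum j'
      push_cast at h1 h2
      rw [h1, h2] at H
      exact H
    have hu : IsUnit ((a i : ℕ) : ZMod (m i)) :=
      (ZMod.isUnit_iff_coprime (a i) (m i)).mpr (hacop i)
    have H3 : ((j i : ℕ) : ZMod (m i)) = ((j' i : ℕ) : ZMod (m i)) := hu.mul_left_cancel H2
    have hmod : j i ≡ j' i [MOD m i] := (ZMod.natCast_eq_natCast_iff _ _ _).mp H3
    have hlt1 : j i < m i := lt_of_le_of_lt (hj i) (Nat.pred_lt (hm i).ne')
    have hlt2 : j' i < m i := lt_of_le_of_lt (hj' i) (Nat.pred_lt (hm i).ne')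
    exact Nat.ModEq.eq_of_lt_of_lt hmod hlt1 hlt2
  refine ⟨hjeq, ?_⟩
  rw [hjeq] at heq
  have h4 : M * k * js = M * k * js' := Nat.add_left_cancel heq
  exact Nat.eq_of_mul_eq_mul_left (Nat.mul_pos hMpos hk) h4
end

section
/- Under the hypotheses of the main theorem, the sets mkℕ \ mklℕ and r_iℕ \ r_i m_iℕ (for i = 1, ..., s) are pairwise disjoint. -/
/-- The residue-class sets making up B are pairwise disjoint. -/
theorem crt_classes_disjoint (k l s : ℕ) (hk : 0 < k) (hl : 0 < l) (hs : 0 < s)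
    (m a r Mbar : Fin s → ℕ)
    (hm : ∀ i, 0 < m i) (ha : ∀ i, 0 < a i) (hr : ∀ i, 0 < r i)
    (hMbar : ∀ i, 0 < Mbar i)
    (hcop : ∀ i j, i ≠ j → Nat.Coprime (m i) (m j))
    (hacop : ∀ i, Nat.Coprime (a i) (m i))
    (hinv : ∀ i, Mbar i * ((∏ t, m t) / m i) ≡ 1 [MOD m i])
    (hri : ∀ i, r i ≡ a i * ((∏ t, m t) / m i) * Mbar i [MOD (∏ t, m t)]) :
    (∀ i, {x : ℕ | 0 < x ∧ (∏ t, m t) * k ∣ x ∧ ¬ (∏ t, m t) * k * l ∣ x} ∩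
        {x : ℕ | 0 < x ∧ r i ∣ x ∧ ¬ r i * m i ∣ x} = ∅) ∧
    (∀ i i', i ≠ i' →
      {x : ℕ | 0 < x ∧ r i ∣ x ∧ ¬ r i * m i ∣ x} ∩
        {x : ℕ | 0 < x ∧ r i' ∣ x ∧ ¬ r i' * m i' ∣ x} = ∅) := by
  set M := ∏ t, m t with hM
  have hmM : ∀ i, m i ∣ M := fun i => Finset.dvd_prod_of_mem m (Finset.mem_univ i)
  -- r i ≡ a i [MOD m i], hence coprime to m i
  have hrcop : ∀ i, Nat.Coprime (r i) (m i) := by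
    intro i
    have h1 : r i ≡ a i * (M / m i) * Mbar i [MOD m i] :=
      (hri i).of_dvd (hmM i)
    have h2 : a i * (M / m i) * Mbar i ≡ a i * 1 [MOD m i] := by
      calc a i * (M / m i) * Mbar i = a i * (Mbar i * (M / m i)) := by ring
        _ ≡ a i * 1 [MOD m i] := Nat.ModEq.mul_left _ (hinv i)
    have h3 : r i ≡ a i [MOD m i] := h1.trans (by simpa using h2)
    have := Nat.ModEq.gcd_eq h3
    unfold Nat.Coprime
    rw [this]
    exact hacop i
  -- key: elements of r i ℕ \ r i m i ℕ are not divisible by m i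
  have key : ∀ i x, 0 < x → r i ∣ x → ¬ r i * m i ∣ x → ¬ m i ∣ x := by
    intro i x hx hrx hnrm hmx
    obtain ⟨j, rfl⟩ := hrx
    have : m i ∣ j := ((hrcop i).symm.dvd_of_dvd_mul_left hmx)
    exact hnrm (by obtain ⟨c, rfl⟩ := this; exact ⟨c, by ring⟩)
  -- m i divides r i' for i ≠ i'
  have hdvd : ∀ i i', i ≠ i' → m i ∣ r i' := by
    intro i i' hne
    have h1 : r i' ≡ a i' * (M / m i') * Mbar i' [MOD m i] :=
      (hri i').of_dvd (hmM i)
    have hMi' : M = m i' * ∏ t ∈ Finset.univ.erase i', m t := by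
      rw [hM, Finset.mul_prod_erase _ _ (Finset.mem_univ i')]
    have hdiv : M / m i' = ∏ t ∈ Finset.univ.erase i', m t := by
      rw [hMi', Nat.mul_div_cancel_left _ (hm i')]
    have hmi : m i ∣ M / m i' := by
      rw [hdiv]
      exact Finset.dvd_prod_of_mem m (Finset.mem_erase.2 ⟨hne, Finset.mem_univ i⟩)
    have h2 : m i ∣ a i' * (M / m i') * Mbar i' :=
      Dvd.dvd.mul_right (Dvd.dvd.mul_left hmi _) _
    have h3 : a i' * (M / m i') * Mbar i' ≡ 0 [MOD m i] :=
      (Nat.modEq_zero_iff_dvd).2 h2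
    exact (Nat.modEq_zero_iff_dvd).1 (h1.trans h3)
  constructor
  · intro i
    ext x
    simp only [Set.mem_inter_iff, Set.mem_setOf_eq, Set.mem_empty_iff_false, iff_false]
    rintro ⟨⟨hx, hMkx, -⟩, ⟨-, hrx, hnrm⟩⟩
    exact key i x hx hrx hnrm ((hmM i).trans (dvd_mul_right M k) |>.trans hMkx)
  · intro i i' hne
    ext x
    simp only [Set.mem_inter_iff, Set.mem_setOf_eq, Set.mem_empty_iff_false, iff_false]
    rintro ⟨⟨hx, hrx, hnrm⟩, ⟨-, hrx', -⟩⟩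
    exact key i x hx hrx hnrm ((hdvd i i' hne).trans hrx')
end
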